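/- Let J : ℝ^d → ℝ be convex, let x* minimize J, and let {x^{(i)}} be generated by x^{(i+1)} = x^{(i)} − α^{(i)} g^{(i)}/max{‖g^{(i)}‖, 1}, where each g^{(i)} is an ε_SA-subgradient of J at x^{(i)} and ‖g^{(i)}‖ ≤ L for all i. Then for any r ≥ 1, min_{0≤k≤r} J(x^{(k)}) − J(x*) ≤ μ·(‖x^{(0)} − x*‖² + ∑_{i=0}^r (α^{(i)})²)/(2∑_{i=0}^r α^{(i)}) + μ·ε_SA, where μ := max{L, 1}. -/

import Mathlib

open Finset
open scoped RealInnerProductSpace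

/-!
Along the iteration, `‖x (i+1) - x⋆‖²` drops by `2 cᵢ (J (x i) - J x⋆ - ε)` up to an error `αᵢ²`,
where `cᵢ = αᵢ / max ‖gᵢ‖ 1 ≥ αᵢ / max L 1` is the actual step length. Telescoping bounds the
weighted sum `∑ cᵢ (J (x i) - J x⋆ - ε)` by `(‖x 0 - x⋆‖² + ∑ αᵢ²) / 2`, and a weighted sum
dominates its smallest term.
-/

section SubgradientStep

variable {E : Type*} [NormedAddCommGroup E] [InnerProductSpace ℝ E]

theorem norm_sub_smul_sub_sq_le {J : E → ℝ} {ε c α : ℝ} {x g y : E} (hc : 0 ≤ c)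
    (hstep : c * ‖g‖ ≤ α) (hsub : J x + ⟪g, y - x⟫ - ε ≤ J y) :
    ‖x - c • g - y‖ ^ 2 ≤ ‖x - y‖ ^ 2 - 2 * c * (J x - J y - ε) + α ^ 2 := by
  have hinner : J x - J y - ε ≤ ⟪g, x - y⟫ := by
    rw [← neg_sub x y, inner_neg_right] at hsub
    linarith
  have hexpand : ‖x - c • g - y‖ ^ 2 = ‖x - y‖ ^ 2 - 2 * c * ⟪g, x - y⟫ + (c * ‖g‖) ^ 2 := by
    rw [sub_right_comm, norm_sub_sq_real, real_inner_smul_right, real_inner_comm, norm_smul,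
      Real.norm_of_nonneg hc]
    ring
  have hsq : (c * ‖g‖) ^ 2 ≤ α ^ 2 := pow_le_pow_left₀ (by positivity) hstep 2
  rw [hexpand]
  nlinarith [mul_le_mul_of_nonneg_left hinner hc]

theorem two_mul_sum_le_of_subgradient_steps {J : E → ℝ} {ε : ℝ} {x g : ℕ → E} {c α : ℕ → ℝ}
    {y : E} (hc : ∀ i, 0 ≤ c i) (hstep : ∀ i, c i * ‖g i‖ ≤ α i)
    (hsub : ∀ i, J (x i) + ⟪g i, y - x i⟫ - ε ≤ J y) (hupd : ∀ i, x (i + 1) = x i - c i • g i)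
    (n : ℕ) :
    2 * ∑ i ∈ range n, c i * (J (x i) - J y - ε) ≤ ‖x 0 - y‖ ^ 2 + ∑ i ∈ range n, α i ^ 2 := by
  have hdescent : ∀ i, 2 * (c i * (J (x i) - J y - ε)) ≤
      (‖x i - y‖ ^ 2 - ‖x (i + 1) - y‖ ^ 2) + α i ^ 2 := fun i => by
    have := norm_sub_smul_sub_sq_le (hc i) (hstep i) (hsub i)
    rw [hupd]
    linarith
  calc 2 * ∑ i ∈ range n, c i * (J (x i) - J y - ε)
      ≤ ∑ i ∈ range n, ((‖x i - y‖ ^ 2 - ‖x (i + 1) - y‖ ^ 2) + α i ^ 2) := by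
        rw [mul_sum]; exact sum_le_sum fun i _ => hdescent i
    _ = ‖x 0 - y‖ ^ 2 - ‖x n - y‖ ^ 2 + ∑ i ∈ range n, α i ^ 2 := by
        rw [sum_add_distrib, sum_range_sub']
    _ ≤ ‖x 0 - y‖ ^ 2 + ∑ i ∈ range n, α i ^ 2 := by
        linarith [sq_nonneg ‖x n - y‖]

end SubgradientStep

theorem div_max_norm_one_mul_norm_le {E : Type*} [SeminormedAddCommGroup E] {α : ℝ} (hα : 0 ≤ α)
    (g : E) : α / max ‖g‖ 1 * ‖g‖ ≤ α := by
  rw [div_mul_eq_mul_div, div_le_iff₀ (by positivity)]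
  exact mul_le_mul_of_nonneg_left (le_max_left _ _) hα

theorem stmt5_general (d : ℕ) (J : EuclideanSpace ℝ (Fin d) → ℝ)
    (xstar : EuclideanSpace ℝ (Fin d))
    (x g : ℕ → EuclideanSpace ℝ (Fin d)) (α : ℕ → ℝ) (hα : ∀ i, 0 < α i)
    (εSA L : ℝ) (hL : ∀ i, ‖g i‖ ≤ L)
    (hsub : ∀ i z, J z ≥ J (x i) + ⟪g i, z - x i⟫ - εSA)
    (hupd : ∀ i, x (i + 1) = x i - (α i / max ‖g i‖ 1) • g i)
    (r : ℕ) :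
    ∃ k ≤ r, J (x k) - J xstar ≤
      max L 1 * (‖x 0 - xstar‖ ^ 2 + ∑ i ∈ Finset.range (r + 1), (α i) ^ 2) /
        (2 * ∑ i ∈ Finset.range (r + 1), α i) + max L 1 * εSA := by
  set μ := max L 1
  have hμ : 0 < μ := lt_max_of_lt_right one_pos
  set c : ℕ → ℝ := fun i => α i / max ‖g i‖ 1
  set bound := μ * (‖x 0 - xstar‖ ^ 2 + ∑ i ∈ range (r + 1), α i ^ 2) /
    (2 * ∑ i ∈ range (r + 1), α i)
  have hc : ∀ i, 0 < c i := fun i => div_pos (hα i) (by positivity)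
  have hcμ : ∀ i, α i / μ ≤ c i := fun i =>
    div_le_div_of_nonneg_left (hα i).le (by positivity) (max_le_max_right 1 (hL i))
  have hε : 0 ≤ εSA := by simpa using hsub 0 (x 0)
  have hεμ : εSA ≤ μ * εSA := le_mul_of_one_le_left hε (le_max_right L 1)
  have hS : 0 < ∑ i ∈ range (r + 1), α i := sum_pos (fun i _ => hα i) nonempty_range_add_one
  have htelescope := two_mul_sum_le_of_subgradient_steps (fun i => (hc i).le)
    (fun i => div_max_norm_one_mul_norm_le (hα i).le (g i)) (fun i => hsub i xstar) hupd (r + 1)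
  have hweighted : ∑ i ∈ range (r + 1), c i * (J (x i) - J xstar - εSA) ≤
      ∑ i ∈ range (r + 1), c i * (bound + μ * εSA - εSA) :=
    calc ∑ i ∈ range (r + 1), c i * (J (x i) - J xstar - εSA)
        ≤ (∑ i ∈ range (r + 1), α i / μ) * bound := by
          rw [← sum_div]; unfold bound; field_simp; linarith
      _ ≤ ∑ i ∈ range (r + 1), c i * (bound + μ * εSA - εSA) := by
          rw [sum_mul]
          exact sum_le_sum fun i _ => mul_le_mul (hcμ i) (by linarith) (by positivity) (hc i).le
  obtain ⟨k, hk, hck⟩ := exists_le_of_sum_le nonempty_range_add_one hweighted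
  refine ⟨k, Nat.lt_succ_iff.mp (mem_range.mp hk), ?_⟩
  linarith [le_of_mul_le_mul_left hck (hc k)]

theorem stmt5 (d : ℕ) (J : EuclideanSpace ℝ (Fin d) → ℝ)
    (hJ : ConvexOn ℝ Set.univ J)
    (xstar : EuclideanSpace ℝ (Fin d)) (hmin : ∀ z, J xstar ≤ J z)
    (x g : ℕ → EuclideanSpace ℝ (Fin d)) (α : ℕ → ℝ) (hα : ∀ i, 0 < α i)
    (εSA L : ℝ) (hL : ∀ i, ‖g i‖ ≤ L)
    (hsub : ∀ i z, J z ≥ J (x i) + ⟪g i, z - x i⟫ - εSA)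
    (hupd : ∀ i, x (i + 1) = x i - (α i / max ‖g i‖ 1) • g i)
    (r : ℕ) (hr : 1 ≤ r) :
    ∃ k ≤ r, J (x k) - J xstar ≤
      max L 1 * (‖x 0 - xstar‖ ^ 2 + ∑ i ∈ Finset.range (r + 1), (α i) ^ 2) /
        (2 * ∑ i ∈ Finset.range (r + 1), α i) + max L 1 * εSA :=
  stmt5_general d J xstar x g α hα εSA L hL hsub hupd r
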